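/- arXiv:2209.10600 — 5 statements merged into one kernel-verified Lean document; each statement's English description precedes it below -/
import Mathlib

section
/- With f(u) = u⁻²((ω² + 3ω_X²)u⁴ - ω_X²(13ω² - 8ω_X²)u² - 4ω_X⁴ω_Y²), the identity 32ω_X⁴ω²(α² - β²)² J = f(α) D₁ + f(β) D₂ holds, where J is the Jacobi integral, and D₁, D₂ are the hidden constants. -/
/-- The Jacobi integral is a function of the two hidden constants:
`32 ωX⁴ ω² (α²-β²)² J = f(α) D₁ + f(β) D₂`. -/
theorem jacobi_from_hidden_constants
    (ω ωX ωY α β : ℝ) (hω : 0 < ω) (hωX : 0 < ωX) (hωY : 0 < ωY)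
    (hsum : ωX ^ 2 + ωY ^ 2 = 3 / 2 * ω ^ 2)
    (hαpos : 0 < α) (hβpos : 0 < β) (hαβ : α ≠ β)
    (hα : α ^ 4 - ω ^ 2 * α ^ 2 + 4 * ωX ^ 2 * ωY ^ 2 = 0)
    (hβ : β ^ 4 - ω ^ 2 * β ^ 2 + 4 * ωX ^ 2 * ωY ^ 2 = 0)
    (X Y : ℝ → ℝ)
    (hXd : Differentiable ℝ X) (hXd2 : Differentiable ℝ (deriv X))
    (hYd : Differentiable ℝ Y) (hYd2 : Differentiable ℝ (deriv Y))
    (heq1 : ∀ t, deriv (deriv X) t - 2 * ω * deriv Y t - 2 * ωX ^ 2 * X t = 0)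
    (heq2 : ∀ t, deriv (deriv Y) t + 2 * ω * deriv X t - 2 * ωY ^ 2 * Y t = 0)
    (f : ℝ → ℝ)
    (hf : ∀ u : ℝ, u ≠ 0 → f u = u⁻¹ ^ 2 *
      ((ω ^ 2 + 3 * ωX ^ 2) * u ^ 4 - ωX ^ 2 * (13 * ω ^ 2 - 8 * ωX ^ 2) * u ^ 2
        - 4 * ωX ^ 4 * ωY ^ 2)) :
    ∀ t : ℝ,
      32 * ωX ^ 4 * ω ^ 2 * (α ^ 2 - β ^ 2) ^ 2 *
        ((1 / 2) * ((deriv X t) ^ 2 + (deriv Y t) ^ 2)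
          - ωX ^ 2 * (X t) ^ 2 - ωY ^ 2 * (Y t) ^ 2) =
      f α * (α ^ 2 * ((β ^ 2 + 2 * ωX ^ 2) * deriv X t - 2 * ω * β ^ 2 * Y t) ^ 2 +
          4 * ωX ^ 4 * (2 * ω * deriv Y t + (β ^ 2 + 2 * ωX ^ 2) * X t) ^ 2) +
      f β * (β ^ 2 * ((α ^ 2 + 2 * ωX ^ 2) * deriv X t - 2 * ω * α ^ 2 * Y t) ^ 2 +
          4 * ωX ^ 4 * (2 * ω * deriv Y t + (α ^ 2 + 2 * ωX ^ 2) * X t) ^ 2) := by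
  intro t
  have hα0 : α ≠ 0 := ne_of_gt hαpos
  have hβ0 : β ≠ 0 := ne_of_gt hβpos
  have hsq : α ^ 2 - β ^ 2 ≠ 0 := by
    intro h
    apply hαβ
    nlinarith [sq_nonneg (α - β), sq_nonneg (α + β)]
  have hab : α ^ 2 + β ^ 2 = ω ^ 2 := by
    have key : (α ^ 2 - β ^ 2) * (α ^ 2 + β ^ 2 - ω ^ 2) = 0 := by
      linear_combination hα - hβ
    rcases mul_eq_zero.mp key with h | h
    · exact absurd h hsq
    · linarith
  have hprod : α ^ 2 * β ^ 2 = 4 * ωX ^ 2 * ωY ^ 2 := by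
    linear_combination α ^ 2 * hab - hα
  have h1 : α ^ 2 * f α = (ω ^ 2 + 3 * ωX ^ 2) * α ^ 4
      - ωX ^ 2 * (13 * ω ^ 2 - 8 * ωX ^ 2) * α ^ 2 - 4 * ωX ^ 4 * ωY ^ 2 := by
    rw [hf α hα0]; field_simp
  have h2 : β ^ 2 * f β = (ω ^ 2 + 3 * ωX ^ 2) * β ^ 4
      - ωX ^ 2 * (13 * ω ^ 2 - 8 * ωX ^ 2) * β ^ 2 - 4 * ωX ^ 4 * ωY ^ 2 := by
    rw [hf β hβ0]; field_simp
  have hne2 : α ^ 2 * β ^ 2 ≠ 0 := by positivity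
  apply mul_left_cancel₀ hne2
  linear_combination (exp := 1)
    ((-64)*ω^2*ωX^12*(X t)^2 + (-128)*ω^3*ωX^10*(X t)*(deriv Y t) + (-64)*ω^4*ωX^8*(deriv Y t)^2 + (-64)*ω^4*ωX^10*(X t)^2 + (-64)*ω^5*ωX^8*(X t)*(deriv Y t) + (-16)*ω^6*ωX^8*(X t)^2 + 64*β^2*ωX^12*(X t)^2 + 128*β^2*ω*ωX^10*(X t)*(deriv Y t) + 64*β^2*ω^2*ωX^8*(deriv Y t)^2 + 64*β^4*ωX^10*(X t)^2 + 64*β^4*ω*ωX^8*(X t)*(deriv Y t) + 16*β^6*ωX^8*(X t)^2 + 64*α^2*ωX^12*(X t)^2 + 128*α^2*ω*ωX^10*(X t)*(deriv Y t) + 64*α^2*ω^2*ωX^8*(deriv Y t)^2 + (-32)*α^2*ω^2*ωX^8*(deriv X t)^2 + (-128)*α^2*ω^2*ωX^10*(X t)^2 + (-384)*α^2*ω^3*ωX^8*(X t)*(deriv Y t) + (-256)*α^2*ω^4*ωX^6*(deriv Y t)^2 + (-48)*α^2*ω^4*ωX^6*(deriv X t)^2 + (-80)*α^2*ω^4*ωX^8*(X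 t)^2 + 32*α^2*ω^5*ωX^6*(Y t)*(deriv X t) + (-128)*α^2*ω^5*ωX^6*(X t)*(deriv Y t) + (-12)*α^2*ω^6*ωX^4*(deriv X t)^2 + (-16)*α^2*ω^6*ωX^6*(X t)^2 + 16*α^2*ω^7*ωX^4*(Y t)*(deriv X t) + 16*α^2*ω^8*ωX^4*(Y t)^2 + 32*α^2*β^2*ωX^8*(deriv X t)^2 + 16*α^2*β^4*ωX^6*(deriv X t)^2 + (-32)*α^2*β^4*ω*ωX^6*(Y t)*(deriv X t) + 4*α^2*β^6*ωX^4*(deriv X t)^2 + (-16)*α^2*β^6*ω*ωX^4*(Y t)*(deriv X t) + (-16)*α^2*β^6*ω^2*ωX^4*(Y t)^2 + 32*α^4*ωX^8*(deriv X t)^2 + 192*α^4*ωX^10*(X t)^2 + 448*α^4*ω*ωX^8*(X t)*(deriv Y t) + 256*α^4*ω^2*ωX^6*(deriv Y t)^2 + 48*α^4*ω^2*ωX^6*(deriv X t)^2 + 80*α^4*ω^2*ωX^8*(X t)^2 + (-32)*α^4*ω^3*ωX^6*(Y t)*(deriv X t) + 128*α^4*ω^3*ωX^6*(X t)*(deriv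 Y t) + (-12)*α^4*ω^4*ωX^4*(deriv X t)^2 + 16*α^4*ω^4*ωX^6*(X t)^2 + 80*α^4*ω^5*ωX^4*(Y t)*(deriv X t) + (-8)*α^4*ω^6*ωX^2*(deriv X t)^2 + (-112)*α^4*ω^6*ωX^4*(Y t)^2 + 32*α^4*ω^7*ωX^2*(Y t)*(deriv X t) + (-32)*α^4*ω^8*ωX^2*(Y t)^2 + 16*α^4*β^2*ωX^6*(deriv X t)^2 + (-32)*α^4*β^2*ω*ωX^6*(Y t)*(deriv X t) + 64*α^4*β^4*ω^2*ωX^4*(Y t)^2 + 16*α^6*ωX^8*(X t)^2 + 48*α^6*ω^2*ωX^4*(deriv X t)^2 + (-192)*α^6*ω^3*ωX^4*(Y t)*(deriv X t) + 16*α^6*ω^4*ωX^2*(deriv X t)^2 + 192*α^6*ω^4*ωX^4*(Y t)^2 + (-64)*α^6*ω^5*ωX^2*(Y t)*(deriv X t) + 64*α^6*ω^6*ωX^2*(Y t)^2 + 4*α^6*β^2*ωX^4*(deriv X t)^2 + (-16)*α^6*β^2*ω*ωX^4*(Y t)*(deriv X t) + (-16)*α^6*β^2*ω^2*ωX^4*(Y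 t)^2 + (-24)*α^8*ωX^4*(deriv X t)^2 + 96*α^8*ω*ωX^4*(Y t)*(deriv X t) + (-8)*α^8*ω^2*ωX^2*(deriv X t)^2 + (-96)*α^8*ω^2*ωX^4*(Y t)^2 + 32*α^8*ω^3*ωX^2*(Y t)*(deriv X t) + (-32)*α^8*ω^4*ωX^2*(Y t)^2) * hsum +
    ((-64)*ωX^14*(X t)^2 + (-128)*ω*ωX^12*(X t)*(deriv Y t) + (-64)*ω^2*ωX^10*(deriv Y t)^2 + 32*ω^2*ωX^12*(X t)^2 + 128*ω^3*ωX^10*(X t)*(deriv Y t) + 96*ω^4*ωX^8*(deriv Y t)^2 + 80*ω^4*ωX^10*(X t)^2 + 96*ω^5*ωX^8*(X t)*(deriv Y t) + 24*ω^6*ωX^8*(X t)^2 + (-64)*β^2*ωX^12*(X t)^2 + (-64)*β^2*ω*ωX^10*(X t)*(deriv Y t) + 80*β^2*ω^2*ωX^10*(X t)^2 + 96*β^2*ω^3*ωX^8*(X t)*(deriv Y t) + 24*β^2*ω^4*ωX^8*(X t)^2 + (-16)*β^4*ωX^10*(X t)^2 + 24*β^4*ω^2*ωX^8*(X t)^2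 + (-32)*α^2*ωX^10*(deriv X t)^2 + (-192)*α^2*ωX^12*(X t)^2 + (-448)*α^2*ω*ωX^10*(X t)*(deriv Y t) + (-256)*α^2*ω^2*ωX^8*(deriv Y t)^2 + 192*α^2*ω^2*ωX^10*(X t)^2 + 32*α^2*ω^3*ωX^8*(Y t)*(deriv X t) + 544*α^2*ω^3*ωX^8*(X t)*(deriv Y t) + 384*α^2*ω^4*ωX^6*(deriv Y t)^2 + 60*α^2*ω^4*ωX^6*(deriv X t)^2 + 128*α^2*ω^4*ωX^8*(X t)^2 + (-32)*α^2*ω^5*ωX^6*(Y t)*(deriv X t) + 192*α^2*ω^5*ωX^6*(X t)*(deriv Y t) + 18*α^2*ω^6*ωX^4*(deriv X t)^2 + 16*α^2*ω^6*ωX^6*(Y t)^2 + 24*α^2*ω^6*ωX^6*(X t)^2 + (-24)*α^2*ω^7*ωX^4*(Y t)*(deriv X t) + (-24)*α^2*ω^8*ωX^4*(Y t)^2 + (-48)*α^2*β^2*ωX^8*(deriv X t)^2 + (-160)*α^2*β^2*ωX^10*(X t)^2 + 32*α^2*β^2*ω*ωX^8*(Y t)*(deriv X t) + (-224)*α^2*β^2*ω*ωX^8*(X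 t)*(deriv Y t) + (-48)*α^2*β^2*ω^2*ωX^6*(deriv Y t)^2 + 60*α^2*β^2*ω^2*ωX^6*(deriv X t)^2 + 136*α^2*β^2*ω^2*ωX^8*(X t)^2 + (-32)*α^2*β^2*ω^3*ωX^6*(Y t)*(deriv X t) + 176*α^2*β^2*ω^3*ωX^6*(X t)*(deriv Y t) + 18*α^2*β^2*ω^4*ωX^4*(deriv X t)^2 + 16*α^2*β^2*ω^4*ωX^6*(Y t)^2 + 20*α^2*β^2*ω^4*ωX^6*(X t)^2 + (-24)*α^2*β^2*ω^5*ωX^4*(Y t)*(deriv X t) + (-24)*α^2*β^2*ω^6*ωX^4*(Y t)^2 + (-16)*α^2*β^4*ωX^6*(deriv X t)^2 + (-32)*α^2*β^4*ωX^8*(X t)^2 + 16*α^2*β^4*ω*ωX^6*(Y t)*(deriv X t) + 16*α^2*β^4*ω^2*ωX^4*(deriv Y t)^2 + 18*α^2*β^4*ω^2*ωX^4*(deriv X t)^2 + 16*α^2*β^4*ω^2*ωX^6*(Y t)^2 + 20*α^2*β^4*ω^2*ωX^6*(X t)^2 + (-24)*α^2*β^4*ω^3*ωX^4*(Y t)*(deriv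 X t) + (-24)*α^2*β^4*ω^4*ωX^4*(Y t)^2 + (-16)*α^4*ωX^10*(X t)^2 + (-24)*α^4*ω^2*ωX^6*(deriv X t)^2 + 24*α^4*ω^2*ωX^8*(X t)^2 + 96*α^4*ω^3*ωX^6*(Y t)*(deriv X t) + 28*α^4*ω^4*ωX^4*(deriv X t)^2 + (-96)*α^4*ω^4*ωX^6*(Y t)^2 + (-112)*α^4*ω^5*ωX^4*(Y t)*(deriv X t) + 12*α^4*ω^6*ωX^2*(deriv X t)^2 + 112*α^4*ω^6*ωX^4*(Y t)^2 + (-48)*α^4*ω^7*ωX^2*(Y t)*(deriv X t) + 48*α^4*ω^8*ωX^2*(Y t)^2 + (-48)*α^4*β^2*ωX^6*(deriv X t)^2 + (-64)*α^4*β^2*ωX^8*(X t)^2 + 112*α^4*β^2*ω*ωX^6*(Y t)*(deriv X t) + (-96)*α^4*β^2*ω*ωX^6*(X t)*(deriv Y t) + (-48)*α^4*β^2*ω^2*ωX^4*(deriv Y t)^2 + 34*α^4*β^2*ω^2*ωX^4*(deriv X t)^2 + (-80)*α^4*β^2*ω^2*ωX^6*(Y t)^2 + (-128)*α^4*β^2*ω^3*ωX^4*(Y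 t)*(deriv X t) + (-32)*α^4*β^2*ω^3*ωX^4*(X t)*(deriv Y t) + 9*α^4*β^2*ω^4*ωX^2*(deriv X t)^2 + 88*α^4*β^2*ω^4*ωX^4*(Y t)^2 + (-4)*α^4*β^2*ω^4*ωX^4*(X t)^2 + (-44)*α^4*β^2*ω^5*ωX^2*(Y t)*(deriv X t) + 52*α^4*β^2*ω^6*ωX^2*(Y t)^2 + (-20)*α^4*β^4*ωX^4*(deriv X t)^2 + (-12)*α^4*β^4*ωX^6*(X t)^2 + 56*α^4*β^4*ω*ωX^4*(Y t)*(deriv X t) + 9*α^4*β^4*ω^2*ωX^2*(deriv X t)^2 + (-32)*α^4*β^4*ω^2*ωX^4*(Y t)^2 + (-4)*α^4*β^4*ω^2*ωX^4*(X t)^2 + (-44)*α^4*β^4*ω^3*ωX^2*(Y t)*(deriv X t) + 52*α^4*β^4*ω^4*ωX^2*(Y t)^2 + 24*α^6*ωX^6*(deriv X t)^2 + (-96)*α^6*ω*ωX^6*(Y t)*(deriv X t) + (-28)*α^6*ω^2*ωX^4*(deriv X t)^2 + 96*α^6*ω^2*ωX^6*(Y t)^2 + 112*α^6*ω^3*ωX^4*(Y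 t)*(deriv X t) + (-12)*α^6*ω^4*ωX^2*(deriv X t)^2 + (-112)*α^6*ω^4*ωX^4*(Y t)^2 + 48*α^6*ω^5*ωX^2*(Y t)*(deriv X t) + (-48)*α^6*ω^6*ωX^2*(Y t)^2 + (-6)*α^6*β^2*ω^2*ωX^2*(deriv X t)^2 + 24*α^6*β^2*ω^3*ωX^2*(Y t)*(deriv X t) + (-2)*α^6*β^2*ω^4*(deriv X t)^2 + (-24)*α^6*β^2*ω^4*ωX^2*(Y t)^2 + 8*α^6*β^2*ω^5*(Y t)*(deriv X t) + (-8)*α^6*β^2*ω^6*(Y t)^2 + (-6)*α^6*β^4*ωX^2*(deriv X t)^2 + 24*α^6*β^4*ω*ωX^2*(Y t)*(deriv X t) + (-2)*α^6*β^4*ω^2*(deriv X t)^2 + (-24)*α^6*β^4*ω^2*ωX^2*(Y t)^2 + 8*α^6*β^4*ω^3*(Y t)*(deriv X t) + (-8)*α^6*β^4*ω^4*(Y t)^2 + 6*α^8*β^2*ωX^2*(deriv X t)^2 + (-24)*α^8*β^2*ω*ωX^2*(Y t)*(deriv X t) + 2*α^8*β^2*ω^2*(deriv X t)^2 + 24*α^8*β^2*ω^2*ωX^2*(Y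 t)^2 + (-8)*α^8*β^2*ω^3*(Y t)*(deriv X t) + 8*α^8*β^2*ω^4*(Y t)^2) * hab +
    ((-16)*ω^2*ωX^10*(X t)^2 + (-32)*ω^3*ωX^8*(X t)*(deriv Y t) + (-16)*ω^4*ωX^6*(deriv Y t)^2 + (-16)*ω^4*ωX^8*(X t)^2 + (-16)*ω^5*ωX^6*(X t)*(deriv Y t) + (-4)*ω^6*ωX^6*(X t)^2 + (-8)*α^2*ω^2*ωX^6*(deriv X t)^2 + (-32)*α^2*ω^2*ωX^8*(X t)^2 + (-96)*α^2*ω^3*ωX^6*(X t)*(deriv Y t) + (-64)*α^2*ω^4*ωX^4*(deriv Y t)^2 + (-12)*α^2*ω^4*ωX^4*(deriv X t)^2 + (-20)*α^2*ω^4*ωX^6*(X t)^2 + 8*α^2*ω^5*ωX^4*(Y t)*(deriv X t) + (-32)*α^2*ω^5*ωX^4*(X t)*(deriv Y t) + (-3)*α^2*ω^6*ωX^2*(deriv X t)^2 + (-4)*α^2*ω^6*ωX^4*(X t)^2 + 4*α^2*ω^7*ωX^2*(Y t)*(deriv X t) + 4*α^2*ω^8*ωX^2*(Y t)^2 + 8*α^4*ωX^6*(deriv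 X t)^2 + 32*α^4*ωX^8*(X t)^2 + 96*α^4*ω*ωX^6*(X t)*(deriv Y t) + 64*α^4*ω^2*ωX^4*(deriv Y t)^2 + 12*α^4*ω^2*ωX^4*(deriv X t)^2 + 20*α^4*ω^2*ωX^6*(X t)^2 + (-8)*α^4*ω^3*ωX^4*(Y t)*(deriv X t) + 32*α^4*ω^3*ωX^4*(X t)*(deriv Y t) + (-3)*α^4*ω^4*ωX^2*(deriv X t)^2 + 4*α^4*ω^4*ωX^4*(X t)^2 + 20*α^4*ω^5*ωX^2*(Y t)*(deriv X t) + (-2)*α^4*ω^6*(deriv X t)^2 + (-28)*α^4*ω^6*ωX^2*(Y t)^2 + 8*α^4*ω^7*(Y t)*(deriv X t) + (-8)*α^4*ω^8*(Y t)^2 + 12*α^6*ω^2*ωX^2*(deriv X t)^2 + (-48)*α^6*ω^3*ωX^2*(Y t)*(deriv X t) + 4*α^6*ω^4*(deriv X t)^2 + 48*α^6*ω^4*ωX^2*(Y t)^2 + (-16)*α^6*ω^5*(Y t)*(deriv X t) + 16*α^6*ω^6*(Y t)^2 + (-6)*α^8*ωX^2*(deriv X t)^2 + 24*α^8*ω*ωX^2*(Y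 t)*(deriv X t) + (-2)*α^8*ω^2*(deriv X t)^2 + (-24)*α^8*ω^2*ωX^2*(Y t)^2 + 8*α^8*ω^3*(Y t)*(deriv X t) + (-8)*α^8*ω^4*(Y t)^2) * hprod -
    (β ^ 2 * (α ^ 2 * ((β ^ 2 + 2 * ωX ^ 2) * deriv X t - 2 * ω * β ^ 2 * Y t) ^ 2 + 4 * ωX ^ 4 * (2 * ω * deriv Y t + (β ^ 2 + 2 * ωX ^ 2) * X t) ^ 2)) * h1 -
    (α ^ 2 * (β ^ 2 * ((α ^ 2 + 2 * ωX ^ 2) * deriv X t - 2 * ω * α ^ 2 * Y t) ^ 2 + 4 * ωX ^ 4 * (2 * ω * deriv Y t + (α ^ 2 + 2 * ωX ^ 2) * X t) ^ 2)) * h2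
end

section
/- Let μ₁, μ₂ > 0 and let r₁, r₂, r₃ : ℝ → ℝ³ be smooth with μ₁r₁ + μ₂r₂ = 0 and r₃'' = μ₁(r₁ - r₃)/|r₁ - r₃|³ + μ₂(r₂ - r₃)/|r₂ - r₃|³, where r₃(t) is never equal to r₁(t) or r₂(t) and r₃, r₁, r₂ are not collinear through the origin. Then the angular momentum h₃ = r₃ × r₃' is constant if and only if |r₁(t) - r₃(t)| = |r₂(t) - r₃(t)| for all t. -/
/-- The cross product on `EuclideanSpace ℝ (Fin 3)`. -/
noncomputable def cross3 (a b : EuclideanSpace ℝ (Fin 3)) : EuclideanSpace ℝ (Fin 3) :=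
  (EuclideanSpace.equiv (Fin 3) ℝ).symm
    ![a 1 * b 2 - a 2 * b 1, a 2 * b 0 - a 0 * b 2, a 0 * b 1 - a 1 * b 0]

namespace Cross3Aux

local notation "E3" => EuclideanSpace ℝ (Fin 3)

lemma cross3_self (a : E3) : cross3 a a = 0 := by
  ext i; fin_cases i <;> simp [cross3] <;> ring

lemma cross3_sub_right (a b c : E3) : cross3 a (b - c) = cross3 a b - cross3 a c := by
  ext i; fin_cases i <;> simp [cross3] <;> ring

lemma cross3_add_right (a b c : E3) : cross3 a (b + c) = cross3 a b + cross3 a c := by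
  ext i; fin_cases i <;> simp [cross3] <;> ring

lemma cross3_smul_right (s : ℝ) (a b : E3) : cross3 a (s • b) = s • cross3 a b := by
  ext i; fin_cases i <;> simp [cross3] <;> ring

lemma hasDerivAt_cross {f g : ℝ → E3} {f' g' : E3} {t : ℝ}
    (hf : HasDerivAt f f' t) (hg : HasDerivAt g g' t) :
    HasDerivAt (fun u => cross3 (f u) (g u)) (cross3 f' (g t) + cross3 (f t) g') t := by
  have hcf : ∀ i, HasDerivAt (fun u => f u i) (f' i) t := by
    intro i
    exact ((EuclideanSpace.proj (𝕜 := ℝ) i).hasFDerivAt).comp_hasDerivAt t hf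
  have hcg : ∀ i, HasDerivAt (fun u => g u i) (g' i) t := by
    intro i
    exact ((EuclideanSpace.proj (𝕜 := ℝ) i).hasFDerivAt).comp_hasDerivAt t hg
  have h0 : HasDerivAt (fun u => f u 1 * g u 2 - f u 2 * g u 1)
      ((cross3 f' (g t) + cross3 (f t) g') 0) t := by
    have h := ((hcf 1).mul (hcg 2)).sub ((hcf 2).mul (hcg 1))
    convert h using 1
    show f' 1 * g t 2 - f' 2 * g t 1 + (f t 1 * g' 2 - f t 2 * g' 1) = _
    ring
    all_goals rfl
  have h1 : HasDerivAt (fun u => f u 2 * g u 0 - f u 0 * g u 2)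
      ((cross3 f' (g t) + cross3 (f t) g') 1) t := by
    have h := ((hcf 2).mul (hcg 0)).sub ((hcf 0).mul (hcg 2))
    convert h using 1
    show f' 2 * g t 0 - f' 0 * g t 2 + (f t 2 * g' 0 - f t 0 * g' 2) = _
    ring
    all_goals rfl
  have h2 : HasDerivAt (fun u => f u 0 * g u 1 - f u 1 * g u 0)
      ((cross3 f' (g t) + cross3 (f t) g') 2) t := by
    have h := ((hcf 0).mul (hcg 1)).sub ((hcf 1).mul (hcg 0))
    convert h using 1
    show f' 0 * g t 1 - f' 1 * g t 0 + (f t 0 * g' 1 - f t 1 * g' 0) = _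
    ring
    all_goals rfl
  have hpi : HasDerivAt (fun u => (EuclideanSpace.equiv (Fin 3) ℝ) (cross3 (f u) (g u)))
      ((EuclideanSpace.equiv (Fin 3) ℝ) (cross3 f' (g t) + cross3 (f t) g')) t := by
    rw [hasDerivAt_pi]
    intro i
    fin_cases i
    · exact h0
    · exact h1
    · exact h2
  have hcomp := ((EuclideanSpace.equiv (Fin 3) ℝ).symm.toContinuousLinearMap.hasFDerivAt).comp_hasDerivAt t hpi
  convert hcomp using 1 <;> rfl

lemma cross3_ne_zero {a b : E3} (h : LinearIndependent ℝ ![a, b]) :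
    cross3 b a ≠ 0 := by
  intro hc
  have ha : a ≠ 0 := h.ne_zero 0
  have e0 : b 1 * a 2 - b 2 * a 1 = 0 := congrArg (fun v : E3 => v 0) hc
  have e1 : b 2 * a 0 - b 0 * a 2 = 0 := congrArg (fun v : E3 => v 1) hc
  have e2 : b 0 * a 1 - b 1 * a 0 = 0 := congrArg (fun v : E3 => v 2) hc
  have mkrel : ∀ k : Fin 3, a k ≠ 0 → False := by
    intro k hk
    have hrel : (b k) • a + (-(a k)) • b = 0 := by
      ext j
      fin_cases k
      · fin_cases j
        · show b 0 * a 0 + -(a 0) * b 0 = 0; ring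
        · show b 0 * a 1 + -(a 0) * b 1 = 0; linarith
        · show b 0 * a 2 + -(a 0) * b 2 = 0; linarith
      · fin_cases j
        · show b 1 * a 0 + -(a 1) * b 0 = 0; linarith
        · show b 1 * a 1 + -(a 1) * b 1 = 0; ring
        · show b 1 * a 2 + -(a 1) * b 2 = 0; linarith
      · fin_cases j
        · show b 2 * a 0 + -(a 2) * b 0 = 0; linarith
        · show b 2 * a 1 + -(a 2) * b 1 = 0; linarith
        · show b 2 * a 2 + -(a 2) * b 2 = 0; ring
    obtain ⟨-, h2⟩ := (LinearIndependent.pair_iff.mp h) (b k) (-(a k)) hrel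
    exact hk (neg_eq_zero.mp h2)
  have habc : a 0 ≠ 0 ∨ a 1 ≠ 0 ∨ a 2 ≠ 0 := by
    by_contra hall
    push_neg at hall
    obtain ⟨h0', h1', h2'⟩ := hall
    apply ha
    ext j
    fin_cases j
    · exact h0'
    · exact h1'
    · exact h2'
  rcases habc with hk | hk | hk
  · exact mkrel 0 hk
  · exact mkrel 1 hk
  · exact mkrel 2 hk

end Cross3Aux

open Cross3Aux in
/-- In the restricted 3-body problem, the angular momentum of the third body about the
mass centre of the primaries is conserved iff the configuration is isosceles. -/
theorem angular_momentum_constant_iff_isosceles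
    (μ₁ μ₂ : ℝ) (hμ₁ : 0 < μ₁) (hμ₂ : 0 < μ₂)
    (r₁ r₂ r₃ : ℝ → EuclideanSpace ℝ (Fin 3))
    (h1 : ContDiff ℝ (⊤ : ℕ∞) r₁) (h2 : ContDiff ℝ (⊤ : ℕ∞) r₂) (h3 : ContDiff ℝ (⊤ : ℕ∞) r₃)
    (hcm : ∀ t, μ₁ • r₁ t + μ₂ • r₂ t = 0)
    (hne1 : ∀ t, r₃ t ≠ r₁ t) (hne2 : ∀ t, r₃ t ≠ r₂ t)
    (hli : ∀ t, LinearIndependent ℝ ![r₂ t, r₃ t])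
    (hode : ∀ t, deriv (deriv r₃) t =
      (μ₁ / ‖r₁ t - r₃ t‖ ^ 3) • (r₁ t - r₃ t) + (μ₂ / ‖r₂ t - r₃ t‖ ^ 3) • (r₂ t - r₃ t)) :
    (∀ t s : ℝ, cross3 (r₃ t) (deriv r₃ t) = cross3 (r₃ s) (deriv r₃ s)) ↔
      ∀ t : ℝ, ‖r₁ t - r₃ t‖ = ‖r₂ t - r₃ t‖ := by
  have hd3 : Differentiable ℝ r₃ := h3.differentiable (by simp)
  have hdv : Differentiable ℝ (deriv r₃) := by
    have h' : ContDiff ℝ (↑(⊤ : ℕ∞)) r₃ := h3.of_le (by simp)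
    exact ((contDiff_infty_iff_deriv.mp h').2).differentiable (by simp)
  set H : ℝ → EuclideanSpace ℝ (Fin 3) := fun t => cross3 (r₃ t) (deriv r₃ t) with hH
  have hHd : ∀ t, HasDerivAt H (cross3 (r₃ t) (deriv (deriv r₃) t)) t := by
    intro t
    have := hasDerivAt_cross (hd3 t).hasDerivAt (hdv t).hasDerivAt
    simpa [cross3_self] using this
  have hr1 : ∀ t, r₁ t = (-(μ₂/μ₁)) • r₂ t := by
    intro t
    have h := eq_neg_of_add_eq_zero_left (hcm t)
    have h2' : r₁ t = μ₁⁻¹ • (-(μ₂ • r₂ t)) := by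
      rw [← h, inv_smul_smul₀ hμ₁.ne']
    rw [h2', smul_neg, smul_smul, ← neg_smul]
    congr 1
    field_simp
  have hd1pos : ∀ t, 0 < ‖r₁ t - r₃ t‖ := fun t =>
    norm_pos_iff.mpr (sub_ne_zero.mpr (hne1 t).symm)
  have hd2pos : ∀ t, 0 < ‖r₂ t - r₃ t‖ := fun t =>
    norm_pos_iff.mpr (sub_ne_zero.mpr (hne2 t).symm)
  have key : ∀ t, cross3 (r₃ t) (deriv (deriv r₃) t)
      = (μ₂ / ‖r₂ t - r₃ t‖ ^ 3 - μ₂ / ‖r₁ t - r₃ t‖ ^ 3) • cross3 (r₃ t) (r₂ t) := by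
    intro t
    have hC1 : cross3 (r₃ t) (r₁ t - r₃ t) = (-(μ₂/μ₁)) • cross3 (r₃ t) (r₂ t) := by
      rw [cross3_sub_right, cross3_self, sub_zero, hr1 t, cross3_smul_right]
    have hC2 : cross3 (r₃ t) (r₂ t - r₃ t) = cross3 (r₃ t) (r₂ t) := by
      rw [cross3_sub_right, cross3_self, sub_zero]
    rw [hode t, cross3_add_right, cross3_smul_right, cross3_smul_right, hC1, hC2, smul_smul,
      ← add_smul]
    congr 1
    have hx : ‖r₁ t - r₃ t‖ ^ 3 ≠ 0 := (pow_pos (hd1pos t) 3).ne'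
    have hy : ‖r₂ t - r₃ t‖ ^ 3 ≠ 0 := (pow_pos (hd2pos t) 3).ne'
    field_simp
    ring
  constructor
  · intro hconst t
    have hderiv0 : cross3 (r₃ t) (deriv (deriv r₃) t) = 0 := by
      have hfun : H = fun _ => H 0 := funext fun s => hconst s 0
      have hd := (hHd t).deriv
      rw [← hd, hfun]
      simp
    rw [key t] at hderiv0
    rcases smul_eq_zero.mp hderiv0 with hcoef | hC
    · have d1 := hd1pos t
      have d2 := hd2pos t
      have h3eq : ‖r₁ t - r₃ t‖ ^ 3 = ‖r₂ t - r₃ t‖ ^ 3 := by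
        have hx : ‖r₁ t - r₃ t‖ ^ 3 ≠ 0 := (pow_pos d1 3).ne'
        have hy : ‖r₂ t - r₃ t‖ ^ 3 ≠ 0 := (pow_pos d2 3).ne'
        have heq : μ₂ / ‖r₂ t - r₃ t‖ ^ 3 = μ₂ / ‖r₁ t - r₃ t‖ ^ 3 := by linarith
        have := (div_eq_div_iff hy hx).mp heq
        have := mul_left_cancel₀ hμ₂.ne' (by linarith : μ₂ * ‖r₁ t - r₃ t‖ ^ 3 = μ₂ * ‖r₂ t - r₃ t‖ ^ 3)
        exact this
      by_contra hne
      rcases lt_or_gt_of_ne hne with hlt | hgt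
      · have := pow_lt_pow_left₀ hlt d1.le (n := 3) (by norm_num)
        linarith
      · have := pow_lt_pow_left₀ hgt d2.le (n := 3) (by norm_num)
        linarith
    · exact absurd hC (cross3_ne_zero (hli t))
  · intro hiso t s
    have hzero : ∀ u, deriv H u = 0 := by
      intro u
      rw [(hHd u).deriv, key u, hiso u, sub_self, zero_smul]
    exact is_const_of_deriv_eq_zero (fun u => (hHd u).differentiableAt) hzero t s
end

section
/- Let H_n denote the (physicists') Hermite polynomials. Fix u > √2 real. If the sequence Q_n = H_n'(√n u)/(√n H_n(√n u)) converges to a limit q as n → ∞ (with H_n(√n u) ≠ 0 for all large n), then q = u - √(u² - 2). -/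
/-!
Put `s = √n`, `x = s u` and `r_k = 2 s H_k(x) / H_{k+1}(x)`, so that `Q_n = r_{n-1}` because
`H_n' = 2n H_{n-1}`. Dividing the three-term recurrence by `s H_{k+1}(x)` gives
`r_{k+1} (2u - (k+1)/n · r_k) = 2`. The smaller root `c = u - √(u² - 2)` of `c (2u - c) = 2` bounds
every `r_k` with `k < n` from above, which at the same time keeps `H_0(x), …, H_n(x)` positive.
Near `k = n` the coefficient `(k+1)/n` is almost `1`, and `r ↦ 2 / (2u - r)` contracts around
its fixed point `c` with factor `c²/2 < 1`; running the last `d` steps therefore gives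
`c - Q_n ≤ (c²/2)^d c + c d²/n`, so `Q_n → c`.
-/

open Filter Topology

/-- The physicists' Hermite polynomials, as functions `ℝ → ℝ`:
`H₀ = 1`, `H₁ = 2x`, `H_{n+2}(x) = 2x H_{n+1}(x) - 2(n+1) H_n(x)`. -/
noncomputable def physHermite : ℕ → ℝ → ℝ
  | 0 => fun _ => 1
  | 1 => fun x => 2 * x
  | (n + 2) => fun x => 2 * x * physHermite (n + 1) x - 2 * (n + 1) * physHermite n x

theorem physHermite_succ (n : ℕ) (x : ℝ) :
    physHermite (n + 1) x = 2 * x * physHermite n x - 2 * n * physHermite (n - 1) x := by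
  cases n with
  | zero => simp [physHermite]
  | succ n => simp [physHermite]

theorem hasDerivAt_physHermite :
    ∀ (n : ℕ) (x : ℝ), HasDerivAt (physHermite n) (2 * n * physHermite (n - 1) x) x
  | 0, x => by simpa [physHermite] using hasDerivAt_const x (1 : ℝ)
  | 1, x => by simpa [physHermite] using (hasDerivAt_id x).const_mul (2 : ℝ)
  | n + 2, x => by
    have h := (((hasDerivAt_id x).const_mul 2).mul (hasDerivAt_physHermite (n + 1) x)).sub
      ((hasDerivAt_physHermite n x).const_mul (2 * ((n : ℝ) + 1)))
    refine h.congr_deriv ?_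
    simp only [Nat.add_succ_sub_one, Nat.add_sub_cancel, id, physHermite_succ n x]
    push_cast
    ring

noncomputable def hermiteRatio (n : ℕ) (u : ℝ) (k : ℕ) : ℝ :=
  2 * √n * physHermite k (√n * u) / physHermite (k + 1) (√n * u)

theorem deriv_physHermite_div_eq_hermiteRatio (n : ℕ) (u : ℝ) :
    deriv (physHermite (n + 1)) (√(n + 1 : ℕ) * u) /
        (√(n + 1 : ℕ) * physHermite (n + 1) (√(n + 1 : ℕ) * u)) =
      hermiteRatio (n + 1) u n := by
  rw [(hasDerivAt_physHermite (n + 1) _).deriv, hermiteRatio, Nat.add_sub_cancel]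
  set s := √(n + 1 : ℕ)
  have hs : s ≠ 0 := by positivity
  have hsq : ((n + 1 : ℕ) : ℝ) = s * s := (Real.mul_self_sqrt (Nat.cast_nonneg _)).symm
  rw [hsq, show 2 * (s * s) * physHermite n (s * u) = s * (2 * s * physHermite n (s * u)) by ring,
    mul_div_mul_left _ _ hs]

theorem hermiteRatio_succ_mul {n : ℕ} (hn : n ≠ 0) (u : ℝ) (k : ℕ)
    (h₁ : physHermite (k + 1) (√n * u) ≠ 0) (h₂ : physHermite (k + 2) (√n * u) ≠ 0) :
    hermiteRatio n u (k + 1) * (2 * u - (k + 1) / n * hermiteRatio n u k) = 2 := by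
  have hrec := physHermite_succ (k + 1) (√n * u)
  simp only [hermiteRatio]
  set s := √(n : ℝ)
  have hs : s ≠ 0 := by positivity
  have hsq : (n : ℝ) = s * s := (Real.mul_self_sqrt (Nat.cast_nonneg _)).symm
  rw [hsq]
  field_simp
  rw [hrec]
  push_cast
  ring

theorem sub_le_sq_div_two_mul_of_mul_eq_two {u c β r r' : ℝ} (hc : c * (2 * u - c) = 2)
    (hc0 : 0 < c) (hβ0 : 0 ≤ β) (hβ1 : β ≤ 1) (hr : r ≤ c) (hr' : r' * (2 * u - β * r) = 2) :
    c - r' ≤ c ^ 2 / 2 * (c - β * r) := by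
  have hβr : β * r ≤ c := by
    rcases le_total 0 r with h | h <;> nlinarith
  have hD : 0 < 2 * u - β * r := by nlinarith
  have hcD : (c - r') * (2 * u - β * r) = c * (c - β * r) := by linear_combination hc - hr'
  have hc2D : c ≤ c ^ 2 / 2 * (2 * u - β * r) := by nlinarith
  refine le_of_mul_le_mul_right ?_ hD
  calc (c - r') * (2 * u - β * r) = c * (c - β * r) := hcD
    _ ≤ c ^ 2 / 2 * (2 * u - β * r) * (c - β * r) := by gcongr
    _ = c ^ 2 / 2 * (c - β * r) * (2 * u - β * r) := by ring

theorem le_pow_mul_add_of_le_mul_add {e : ℕ → ℝ} {ρ δ : ℝ} (hρ0 : 0 ≤ ρ) (hρ1 : ρ ≤ 1)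
    (hδ : 0 ≤ δ) {d : ℕ} (h : ∀ j < d, e (j + 1) ≤ ρ * e j + δ) :
    e d ≤ ρ ^ d * e 0 + d * δ := by
  induction d with
  | zero => simp
  | succ d ih =>
    have ih := ih fun j hj => h j (by omega)
    calc e (d + 1) ≤ ρ * e d + δ := h d d.lt_succ_self
      _ ≤ ρ * (ρ ^ d * e 0 + d * δ) + δ := by gcongr
      _ = ρ ^ (d + 1) * e 0 + ρ * (d * δ) + δ := by ring
      _ ≤ ρ ^ (d + 1) * e 0 + (d + 1 : ℕ) * δ := by
        push_cast
        linarith [mul_le_of_le_one_left (by positivity : (0 : ℝ) ≤ d * δ) hρ1]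

section

variable {u c : ℝ}

theorem physHermite_pos_and_two_mul_le (hc : c * (2 * u - c) = 2) (hc0 : 0 < c)
    {n k : ℕ} (hk : k < n) :
    0 < physHermite k (√n * u) ∧
      2 * √n * physHermite k (√n * u) ≤ c * physHermite (k + 1) (√n * u) := by
  have hs : 0 < √(n : ℝ) := Real.sqrt_pos.2 (by exact_mod_cast (show 0 < n by omega))
  have hsq : √(n : ℝ) * √n = n := Real.mul_self_sqrt (Nat.cast_nonneg _)
  induction k with
  | zero =>
    refine ⟨one_pos, ?_⟩
    simp only [physHermite]
    nlinarith [mul_nonneg hs.le (sq_nonneg c)]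
  | succ k ih =>
    obtain ⟨hpos, hle⟩ := ih (by omega)
    have hpos' : 0 < physHermite (k + 1) (√n * u) := by nlinarith
    refine ⟨hpos', ?_⟩
    have hkn : (k : ℝ) + 1 ≤ n := by exact_mod_cast hk.le
    have hcross : 2 * ((k : ℝ) + 1) * physHermite k (√n * u) ≤
        √n * (c * physHermite (k + 1) (√n * u)) :=
      calc 2 * ((k : ℝ) + 1) * physHermite k (√n * u)
          ≤ 2 * n * physHermite k (√n * u) := by gcongr
        _ = √n * (2 * √n * physHermite k (√n * u)) := by
          linear_combination (-2 * physHermite k (√n * u)) * hsq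
        _ ≤ √n * (c * physHermite (k + 1) (√n * u)) := by gcongr
    have hfix : c * (2 * u - c) * (√n * physHermite (k + 1) (√n * u)) =
        2 * (√n * physHermite (k + 1) (√n * u)) := by rw [hc]
    rw [physHermite_succ (k + 1), Nat.add_sub_cancel]
    push_cast
    nlinarith [mul_le_mul_of_nonneg_left hcross hc0.le]

theorem physHermite_succ_pos (hc : c * (2 * u - c) = 2) (hc0 : 0 < c)
    {n k : ℕ} (hk : k < n) : 0 < physHermite (k + 1) (√n * u) := by
  obtain ⟨hpos, hle⟩ := physHermite_pos_and_two_mul_le hc hc0 hk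
  have hs : 0 < √(n : ℝ) := Real.sqrt_pos.2 (by exact_mod_cast (show 0 < n by omega))
  nlinarith

theorem hermiteRatio_nonneg (hc : c * (2 * u - c) = 2) (hc0 : 0 < c)
    {n k : ℕ} (hk : k < n) : 0 ≤ hermiteRatio n u k :=
  div_nonneg (by have := (physHermite_pos_and_two_mul_le hc hc0 hk).1; positivity)
    (physHermite_succ_pos hc hc0 hk).le

theorem hermiteRatio_le (hc : c * (2 * u - c) = 2) (hc0 : 0 < c)
    {n k : ℕ} (hk : k < n) : hermiteRatio n u k ≤ c :=
  (div_le_iff₀ (physHermite_succ_pos hc hc0 hk)).2 (physHermite_pos_and_two_mul_le hc hc0 hk).2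

theorem sub_hermiteRatio_succ_le (hc : c * (2 * u - c) = 2) (hc0 : 0 < c)
    (hc2 : c ^ 2 ≤ 2) {n k : ℕ} (hk : k + 1 < n) :
    c - hermiteRatio n u (k + 1) ≤
      c ^ 2 / 2 * (c - hermiteRatio n u k) + c * (1 - (k + 1) / n) := by
  have hn : (0 : ℝ) < n := by exact_mod_cast (show 0 < n by omega)
  set β : ℝ := (k + 1) / n
  have hβ1 : β ≤ 1 := div_le_one_of_le₀ (by exact_mod_cast hk.le) hn.le
  have hr := hermiteRatio_le hc hc0 (u := u) (show k < n by omega)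
  have hstep := sub_le_sq_div_two_mul_of_mul_eq_two hc hc0 (by positivity) hβ1 hr
    (hermiteRatio_succ_mul (by omega) u k (physHermite_succ_pos hc hc0 (show k < n by omega)).ne'
      (physHermite_succ_pos hc hc0 hk).ne')
  have hβr : c - β * hermiteRatio n u k ≤ (c - hermiteRatio n u k) + (1 - β) * c := by
    nlinarith
  calc c - hermiteRatio n u (k + 1) ≤ c ^ 2 / 2 * (c - β * hermiteRatio n u k) := hstep
    _ ≤ c ^ 2 / 2 * ((c - hermiteRatio n u k) + (1 - β) * c) := by gcongr
    _ ≤ c ^ 2 / 2 * (c - hermiteRatio n u k) + c * (1 - β) := by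
      nlinarith [mul_nonneg (sub_nonneg.2 hβ1) hc0.le]

theorem sub_hermiteRatio_le (hc : c * (2 * u - c) = 2) (hc0 : 0 < c)
    (hc2 : c ^ 2 ≤ 2) (m d : ℕ) :
    c - hermiteRatio (m + d + 1) u (m + d) ≤
      (c ^ 2 / 2) ^ d * c + c * d ^ 2 / (m + d + 1 : ℕ) := by
  set N := m + d + 1
  have hN : (0 : ℝ) < N := by positivity
  have hstep : ∀ j < d, c - hermiteRatio N u (m + j + 1) ≤
      c ^ 2 / 2 * (c - hermiteRatio N u (m + j)) + c * d / N := by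
    intro j hj
    have hlate : c * (1 - ((m + j : ℕ) + 1) / N) ≤ c * d / N := by
      rw [mul_div_assoc]
      gcongr
      rw [sub_le_iff_le_add, ← add_div, le_div_iff₀ hN]
      simp only [N]
      push_cast
      linarith
    exact (sub_hermiteRatio_succ_le hc hc0 hc2 (by omega)).trans (add_le_add_right hlate _)
  have hiter := le_pow_mul_add_of_le_mul_add (e := fun j => c - hermiteRatio N u (m + j))
    (by positivity) (by linarith) (by positivity) hstep
  have hr := hermiteRatio_nonneg hc hc0 (u := u) (show m < N by omega)
  calc c - hermiteRatio N u (m + d)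
      ≤ (c ^ 2 / 2) ^ d * (c - hermiteRatio N u m) + d * (c * d / N) := by simpa using hiter
    _ ≤ (c ^ 2 / 2) ^ d * c + c * d ^ 2 / N := by
      rw [show (d : ℝ) * (c * d / N) = c * d ^ 2 / N by ring]
      gcongr
      linarith

theorem tendsto_hermiteRatio (hc : c * (2 * u - c) = 2) (hc0 : 0 < c)
    (hc2 : c ^ 2 < 2) :
    Tendsto (fun n : ℕ => hermiteRatio (n + 1) u n) atTop (𝓝 c) := by
  refine tendsto_order.2 ⟨fun a ha => ?_, fun a ha =>
    Eventually.of_forall fun n => (hermiteRatio_le hc hc0 n.lt_succ_self).trans_lt ha⟩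
  obtain ⟨d, hd⟩ := exists_pow_lt_of_lt_one (show 0 < (c - a) / (2 * c) by
    apply div_pos <;> linarith) (show c ^ 2 / 2 < 1 by linarith)
  have hsmall : ∀ᶠ n : ℕ in atTop, c * d ^ 2 / (n + 1 : ℕ) < (c - a) / 2 :=
    ((tendsto_const_div_atTop_nhds_zero_nat (c * d ^ 2)).comp (tendsto_add_atTop_nat 1)).eventually
      (gt_mem_nhds (by linarith))
  filter_upwards [eventually_ge_atTop d, hsmall] with n hn hnd
  obtain ⟨m, rfl⟩ := Nat.exists_eq_add_of_le' hn
  have hpow : (c ^ 2 / 2) ^ d * c < (c - a) / 2 := by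
    calc (c ^ 2 / 2) ^ d * c < (c - a) / (2 * c) * c := by gcongr
      _ = (c - a) / 2 := by field_simp
  linarith [sub_hermiteRatio_le hc hc0 hc2.le m d]

end

theorem sub_sqrt_mul_eq_two {u : ℝ} (hu : 2 ≤ u ^ 2) :
    (u - √(u ^ 2 - 2)) * (2 * u - (u - √(u ^ 2 - 2))) = 2 := by
  linear_combination -Real.sq_sqrt (sub_nonneg.2 hu)

theorem sub_sqrt_pos {u : ℝ} (hu : √2 < u) : 0 < u - √(u ^ 2 - 2) :=
  sub_pos.2 ((Real.sqrt_lt' ((Real.sqrt_nonneg 2).trans_lt hu)).2 (by linarith))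

theorem sub_sqrt_sq_lt_two {u : ℝ} (hu : √2 < u) : (u - √(u ^ 2 - 2)) ^ 2 < 2 := by
  have hu2 := Real.lt_sq_of_sqrt_lt hu
  have hw : 0 < √(u ^ 2 - 2) := Real.sqrt_pos.2 (by linarith)
  have hc := sub_sqrt_pos hu
  nlinarith [sub_sqrt_mul_eq_two hu2.le]

theorem hermite_ratio_limit_general (u q : ℝ) (hu : Real.sqrt 2 < u)
    (hconv : Tendsto
      (fun n : ℕ => deriv (physHermite n) (Real.sqrt n * u) /
        (Real.sqrt n * physHermite n (Real.sqrt n * u)))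
      atTop (𝓝 q)) :
    q = u - Real.sqrt (u ^ 2 - 2) := by
  have hlim := tendsto_hermiteRatio (sub_sqrt_mul_eq_two (Real.lt_sq_of_sqrt_lt hu).le)
    (sub_sqrt_pos hu) (sub_sqrt_sq_lt_two hu)
  refine tendsto_nhds_unique ((tendsto_add_atTop_iff_nat 1).2 hconv) ?_
  simpa only [deriv_physHermite_div_eq_hermiteRatio] using hlim

/-- If `Q_n = H_n'(√n u)/(√n H_n(√n u))` converges, its limit is `u - √(u² - 2)`. -/
theorem hermite_ratio_limit (u q : ℝ) (hu : Real.sqrt 2 < u)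
    (hne : ∀ᶠ n : ℕ in atTop, physHermite n (Real.sqrt n * u) ≠ 0)
    (hconv : Tendsto
      (fun n : ℕ => deriv (physHermite n) (Real.sqrt n * u) /
        (Real.sqrt n * physHermite n (Real.sqrt n * u)))
      atTop (𝓝 q)) :
    q = u - Real.sqrt (u ^ 2 - 2) :=
  hermite_ratio_limit_general u q hu hconv
end

section
/- Let R, S : ℝⁿ → ℝ and A : ℝⁿ → ℝⁿ be smooth, V : ℝⁿ → ℝ smooth, E ∈ ℝ, and suppose the energy equation (1/2)(|∇S - A|² - |∇R|²) + V = E holds identically. If X : ℝ → ℝⁿ satisfies X'(t) = (∇(R+S) - A)(X(t)), then X''(t) = -∇(V - |∇R|²)(X(t)) + X'(t) × curl A(X(t)) (in ℝ³), where additionally the orthogonality (∇S - A)·∇R = 0 holds. -/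
open RealInnerProductSpace

/-- The curl of a vector field on `EuclideanSpace ℝ (Fin 3)`. -/
noncomputable def curl3 (A : EuclideanSpace ℝ (Fin 3) → EuclideanSpace ℝ (Fin 3))
    (x : EuclideanSpace ℝ (Fin 3)) : EuclideanSpace ℝ (Fin 3) :=
  let p : Fin 3 → Fin 3 → ℝ := fun i j => fderiv ℝ A x (EuclideanSpace.single i (1 : ℝ)) j
  (EuclideanSpace.equiv (Fin 3) ℝ).symm
    ![p 1 2 - p 2 1, p 2 0 - p 0 2, p 0 1 - p 1 0]

open RealInnerProductSpace

namespace SemiclassicalAux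

local notation "E3" => EuclideanSpace ℝ (Fin 3)

noncomputable def e3 (i : Fin 3) : E3 := EuclideanSpace.single i (1 : ℝ)

lemma single_eq_e3 (i : Fin 3) : EuclideanSpace.single i (1 : ℝ) = e3 i := rfl

lemma inner_e3 (v : E3) (i : Fin 3) : ⟪v, e3 i⟫ = v i := by
  simp only [e3, EuclideanSpace.inner_single_right, RCLike.star_def]
  simp

lemma toDualSymm_apply' (ℓ : E3 →L[ℝ] ℝ) (i : Fin 3) :
    (InnerProductSpace.toDual ℝ E3).symm ℓ i = ℓ (e3 i) := by
  rw [← inner_e3 ((InnerProductSpace.toDual ℝ E3).symm ℓ) i]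
  exact InnerProductSpace.toDual_symm_apply

lemma grad_apply' (f : E3 → ℝ) (x : E3) (i : Fin 3) :
    gradient f x i = fderiv ℝ f x (e3 i) := toDualSymm_apply' _ i

lemma basis_expand (y : E3) : y = y 0 • e3 0 + y 1 • e3 1 + y 2 • e3 2 := by
  ext i
  fin_cases i <;> simp [e3, EuclideanSpace.single_apply]

lemma inner_expand (a b : E3) : ⟪a, b⟫ = a 0 * b 0 + a 1 * b 1 + a 2 * b 2 := by
  simp [PiLp.inner_apply, Fin.sum_univ_three]
  ring


lemma equiv_symm_apply3 (f : Fin 3 -> ℝ) (j : Fin 3) :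
    (EuclideanSpace.equiv (Fin 3) ℝ).symm f j = f j := by
  simp

lemma clm_expand (T : E3 →L[ℝ] ℝ) (b : E3) :
    T b = b 0 * T (e3 0) + b 1 * T (e3 1) + b 2 * T (e3 2) := by
  conv_lhs => rw [basis_expand b]
  simp [map_add, map_smul]

lemma clm_expand' (T : E3 →L[ℝ] E3) (b : E3) (j : Fin 3) :
    T b j = b 0 * T (e3 0) j + b 1 * T (e3 1) j + b 2 * T (e3 2) j := by
  conv_lhs => rw [basis_expand b]
  simp [map_add, map_smul]

section
variable (R : E3 → ℝ) (hR : ContDiff ℝ (⊤ : ℕ∞) R) (x : E3)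

/-- second derivative as a continuous bilinear map -/
noncomputable def H2 : E3 →L[ℝ] E3 →L[ℝ] ℝ := fderiv ℝ (fderiv ℝ R) x

/-- derivative of the gradient -/
noncomputable def DG : E3 →L[ℝ] E3 :=
  ((InnerProductSpace.toDual ℝ E3).symm.toContinuousLinearMap).comp (H2 R x)

include hR

lemma hasFDerivAt_fderiv' : HasFDerivAt (fderiv ℝ R) (H2 R x) x :=
  (((hR.fderiv_right (m := (⊤ : ℕ∞)) (by simp)).differentiable (by simp)) x).hasFDerivAt

lemma schwarz (u w : E3) : H2 R x u w = H2 R x w u :=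
  second_derivative_symmetric (fun y => ((hR.differentiable (by simp)) y).hasFDerivAt)
    (hasFDerivAt_fderiv' R hR x) u w

lemma hasFDerivAt_gradient : HasFDerivAt (gradient R) (DG R x) x :=
  ((InnerProductSpace.toDual ℝ E3).symm.toContinuousLinearMap.hasFDerivAt).comp x
    (hasFDerivAt_fderiv' R hR x)

lemma contDiff_gradient : ContDiff ℝ (⊤ : ℕ∞) (gradient R) :=
  ((InnerProductSpace.toDual ℝ E3).symm.toContinuousLinearMap.contDiff).comp
    (hR.fderiv_right (by simp))

end

lemma DG_apply (R : E3 → ℝ) (x : E3) (u : E3) (i : Fin 3) :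
    DG R x u i = H2 R x u (e3 i) := by
  simp [DG, toDualSymm_apply']

section main

variable (R S V : E3 → ℝ) (A : E3 → E3) (E : ℝ)
variable (hR : ContDiff ℝ (⊤ : ℕ∞) R) (hS : ContDiff ℝ (⊤ : ℕ∞) S) (hV : ContDiff ℝ (⊤ : ℕ∞) V) (hA : ContDiff ℝ (⊤ : ℕ∞) A)
variable (horth : ∀ x, ⟪gradient S x - A x, gradient R x⟫ = (0 : ℝ))
variable (henergy : ∀ x, (1 / 2) * (‖gradient S x - A x‖ ^ 2 - ‖gradient R x‖ ^ 2) + V x = E)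

include hR hS in
lemma grad_add_eq :
    gradient (fun z => R z + S z) = fun y => gradient R y + gradient S y := by
  funext y
  ext i
  have h : fderiv ℝ (fun z => R z + S z) y = fderiv ℝ R y + fderiv ℝ S y :=
    fderiv_add (hR.differentiable (by simp) y) (hS.differentiable (by simp) y)
  rw [grad_apply', h]
  simp [grad_apply']

include hR hS hV hA horth henergy in
set_option maxHeartbeats 1600000 in
lemma key_identity (x : E3) :
    fderiv ℝ (fun y => gradient (fun z => R z + S z) y - A y) x
        (gradient (fun z => R z + S z) x - A x)
      = -(gradient (fun y => V y - ‖gradient R y‖ ^ 2) x) +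
          cross3 (gradient (fun z => R z + S z) x - A x) (curl3 A x) := by
  have hAd : HasFDerivAt A (fderiv ℝ A x) x := (hA.differentiable (by simp) x).hasFDerivAt
  -- derivative of the velocity field
  have hveq : (fun y => gradient (fun z => R z + S z) y - A y)
      = fun y => gradient R y + (gradient S y - A y) := by
    rw [grad_add_eq R S hR hS]; funext y; exact add_sub_assoc _ _ _
  have hvd : HasFDerivAt (fun y => gradient (fun z => R z + S z) y - A y)
      (DG R x + (DG S x - fderiv ℝ A x)) x := by
    rw [hveq]
    exact (hasFDerivAt_gradient R hR x).add ((hasFDerivAt_gradient S hS x).sub hAd)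
  -- derivative of ‖∇R‖²
  have hRR : HasFDerivAt (fun y => ⟪gradient R y, gradient R y⟫)
      ((fderivInnerCLM ℝ (gradient R x, gradient R x)).comp
        ((DG R x).prod (DG R x))) x :=
    (hasFDerivAt_gradient R hR x).inner ℝ (hasFDerivAt_gradient R hR x)
  -- derivative of W = V - ‖∇R‖²
  have hWrw : (fun y => V y - ‖gradient R y‖ ^ 2)
      = fun y => V y - ⟪gradient R y, gradient R y⟫ := by
    funext y; rw [real_inner_self_eq_norm_sq]
  have hWd : HasFDerivAt (fun y => V y - ‖gradient R y‖ ^ 2)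
      (fderiv ℝ V x - ((fderivInnerCLM ℝ (gradient R x, gradient R x)).comp
        ((DG R x).prod (DG R x)))) x := by
    rw [hWrw]
    exact ((hV.differentiable (by simp) x).hasFDerivAt).sub hRR
  -- derivative of F = ∇S - A
  have hFd : HasFDerivAt (fun y => gradient S y - A y) (DG S x - fderiv ℝ A x) x :=
    (hasFDerivAt_gradient S hS x).sub hAd
  have hFF : HasFDerivAt (fun y => ⟪gradient S y - A y, gradient S y - A y⟫)
      ((fderivInnerCLM ℝ (gradient S x - A x, gradient S x - A x)).comp
        ((DG S x - fderiv ℝ A x).prod (DG S x - fderiv ℝ A x))) x :=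
    hFd.inner ℝ hFd
  -- differentiated energy equation
  have hgrw : (fun y => (1 / 2) * (‖gradient S y - A y‖ ^ 2 - ‖gradient R y‖ ^ 2) + V y)
      = fun y => (1 / 2) * (⟪gradient S y - A y, gradient S y - A y⟫
          - ⟪gradient R y, gradient R y⟫) + V y := by
    funext y; rw [real_inner_self_eq_norm_sq, real_inner_self_eq_norm_sq]
  have hgd : HasFDerivAt
      (fun y => (1 / 2) * (‖gradient S y - A y‖ ^ 2 - ‖gradient R y‖ ^ 2) + V y)
      ((1 / 2 : ℝ) • ((fderivInnerCLM ℝ (gradient S x - A x, gradient S x - A x)).comp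
          ((DG S x - fderiv ℝ A x).prod (DG S x - fderiv ℝ A x))
        - (fderivInnerCLM ℝ (gradient R x, gradient R x)).comp
          ((DG R x).prod (DG R x)))
        + fderiv ℝ V x) x := by
    rw [hgrw]
    exact ((hFF.sub hRR).const_mul (1 / 2)).add (hV.differentiable (by simp) x).hasFDerivAt
  have hg0 : ((1 / 2 : ℝ) • ((fderivInnerCLM ℝ (gradient S x - A x, gradient S x - A x)).comp
          ((DG S x - fderiv ℝ A x).prod (DG S x - fderiv ℝ A x))
        - (fderivInnerCLM ℝ (gradient R x, gradient R x)).comp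
          ((DG R x).prod (DG R x)))
        + fderiv ℝ V x) = 0 := by
    rw [← hgd.fderiv, funext henergy]
    exact fderiv_const_apply E
  -- differentiated orthogonality equation
  have hod : HasFDerivAt (fun y => ⟪gradient S y - A y, gradient R y⟫)
      ((fderivInnerCLM ℝ (gradient S x - A x, gradient R x)).comp
        ((DG S x - fderiv ℝ A x).prod (DG R x))) x :=
    hFd.inner ℝ (hasFDerivAt_gradient R hR x)
  have ho0 : ((fderivInnerCLM ℝ (gradient S x - A x, gradient R x)).comp
        ((DG S x - fderiv ℝ A x).prod (DG R x))) = 0 := by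
    rw [← hod.fderiv, funext horth]
    exact fderiv_const_apply 0
  -- pass to scalar component equations
  have EQ : ∀ j : Fin 3,
      (1 / 2 : ℝ) * ((⟪gradient S x - A x, (DG S x - fderiv ℝ A x) (e3 j)⟫
          + ⟪(DG S x - fderiv ℝ A x) (e3 j), gradient S x - A x⟫)
        - (⟪gradient R x, DG R x (e3 j)⟫ + ⟪DG R x (e3 j), gradient R x⟫))
        + fderiv ℝ V x (e3 j) = 0 := by
    intro j
    have := congrArg (fun (T : E3 →L[ℝ] ℝ) => T (e3 j)) hg0
    simpa [fderivInnerCLM_apply] using this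
  have ORT : ∀ j : Fin 3,
      ⟪gradient S x - A x, DG R x (e3 j)⟫
        + ⟪(DG S x - fderiv ℝ A x) (e3 j), gradient R x⟫ = 0 := by
    intro j
    have := congrArg (fun (T : E3 →L[ℝ] ℝ) => T (e3 j)) ho0
    simpa [fderivInnerCLM_apply] using this
  -- now work componentwise
  rw [hvd.fderiv]
  ext j
  have hb : ∀ i, (gradient (fun z => R z + S z) x - A x) i
      = fderiv ℝ R x (e3 i) + fderiv ℝ S x (e3 i) - A x i := by
    intro i
    rw [PiLp.sub_apply, grad_add_eq R S hR hS]
    simp [grad_apply']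
  have hWg : ∀ j : Fin 3, gradient (fun y => V y - ‖gradient R y‖ ^ 2) x j
      = fderiv ℝ V x (e3 j)
        - (⟪gradient R x, DG R x (e3 j)⟫ + ⟪DG R x (e3 j), gradient R x⟫) := by
    intro j
    rw [grad_apply', hWd.fderiv]
    simp [fderivInnerCLM_apply]
  have EQj := EQ j
  have ORTj := ORT j
  -- expand everything into scalar atoms
  simp only [inner_expand, ContinuousLinearMap.sub_apply, PiLp.sub_apply,
    DG_apply, grad_apply'] at EQj ORTj
  have hSw := fun i j => schwarz S hS x (e3 i) (e3 j)
  have hRw := fun i j => schwarz R hR x (e3 i) (e3 j)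
  rw [ContinuousLinearMap.add_apply, ContinuousLinearMap.sub_apply]
  rw [PiLp.add_apply, PiLp.sub_apply, PiLp.add_apply, PiLp.neg_apply, hWg j]
  rw [clm_expand' (DG R x) _ j, clm_expand' (DG S x) _ j, clm_expand' (fderiv ℝ A x) _ j]
  simp only [inner_expand, PiLp.sub_apply, DG_apply, grad_apply', hb]
  fin_cases j
  all_goals simp only [Fin.zero_eta, Fin.mk_one, Fin.reduceFinMk, Fin.isValue] at EQj ORTj ⊢
  all_goals simp only [cross3, curl3, equiv_symm_apply3, Matrix.cons_val_zero,
    Matrix.cons_val_one, Matrix.cons_val_two, Matrix.head_cons, Matrix.tail_cons, hb, single_eq_e3]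
  · linear_combination EQj + ORTj
      + (fderiv ℝ R x (e3 0) + fderiv ℝ S x (e3 0) - A x 0) * (hRw 0 0 + hSw 0 0)
      + (fderiv ℝ R x (e3 1) + fderiv ℝ S x (e3 1) - A x 1) * (hRw 1 0 + hSw 1 0)
      + (fderiv ℝ R x (e3 2) + fderiv ℝ S x (e3 2) - A x 2) * (hRw 2 0 + hSw 2 0)
  · linear_combination EQj + ORTj
      + (fderiv ℝ R x (e3 0) + fderiv ℝ S x (e3 0) - A x 0) * (hRw 0 1 + hSw 0 1)
      + (fderiv ℝ R x (e3 1) + fderiv ℝ S x (e3 1) - A x 1) * (hRw 1 1 + hSw 1 1)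
      + (fderiv ℝ R x (e3 2) + fderiv ℝ S x (e3 2) - A x 2) * (hRw 2 1 + hSw 2 1)
  · linear_combination EQj + ORTj
      + (fderiv ℝ R x (e3 0) + fderiv ℝ S x (e3 0) - A x 0) * (hRw 0 2 + hSw 0 2)
      + (fderiv ℝ R x (e3 1) + fderiv ℝ S x (e3 1) - A x 1) * (hRw 1 2 + hSw 1 2)
      + (fderiv ℝ R x (e3 2) + fderiv ℝ S x (e3 2) - A x 2) * (hRw 2 2 + hSw 2 2)

end main
end SemiclassicalAux

/-- Semi-classical Newton's second law with a vector potential: along trajectories of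
`X' = (∇(R+S) - A)(X)`, one has `X'' = -∇(V - |∇R|²)(X) + X' × curl A (X)`. -/
theorem semiclassical_newton_with_vector_potential
    (R S V : EuclideanSpace ℝ (Fin 3) → ℝ)
    (A : EuclideanSpace ℝ (Fin 3) → EuclideanSpace ℝ (Fin 3)) (E : ℝ)
    (hR : ContDiff ℝ (⊤ : ℕ∞) R) (hS : ContDiff ℝ (⊤ : ℕ∞) S) (hV : ContDiff ℝ (⊤ : ℕ∞) V) (hA : ContDiff ℝ (⊤ : ℕ∞) A)
    (horth : ∀ x, ⟪gradient S x - A x, gradient R x⟫ = (0 : ℝ))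
    (henergy : ∀ x, (1 / 2) * (‖gradient S x - A x‖ ^ 2 - ‖gradient R x‖ ^ 2) + V x = E)
    (X : ℝ → EuclideanSpace ℝ (Fin 3))
    (hX : ∀ t, HasDerivAt X
      (gradient (fun y => R y + S y) (X t) - A (X t)) t) :
    ∀ t, HasDerivAt (fun s => deriv X s)
      (-(gradient (fun y => V y - ‖gradient R y‖ ^ 2) (X t)) +
        cross3 (deriv X t) (curl3 A (X t))) t := by
  intro t
  have hv : ContDiff ℝ (⊤ : ℕ∞) (fun y => gradient (fun z => R z + S z) y - A y) := by
    rw [SemiclassicalAux.grad_add_eq R S hR hS]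
    exact ((SemiclassicalAux.contDiff_gradient R hR).add
      (SemiclassicalAux.contDiff_gradient S hS)).sub hA
  have hd : (fun s => deriv X s)
      = fun s => gradient (fun z => R z + S z) (X s) - A (X s) :=
    funext fun s => (hX s).deriv
  rw [hd, (hX t).deriv,
    ← SemiclassicalAux.key_identity R S V A E hR hS hV hA horth henergy (X t)]
  exact (hv.differentiable (by simp) (X t)).hasFDerivAt.comp_hasDerivAt t (hX t)
end

section
/- Let R, S, V : ℝⁿ → ℝ be smooth with ∇R·∇S = 0 and (1/2)(|∇S|² - |∇R|²) + V = E identically. If X : ℝ → ℝⁿ satisfies X'(t) = (∇S + ∇R)(X(t)), then ((∇R+∇S)·∇)(∇R+∇S) = -∇(V - |∇R|²), i.e. X''(t) = -∇(V - |∇R|²)(X(t)), so Newton's second law holds with the quantum-corrected effective potential V_eff = V - |∇R|². -/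
open RealInnerProductSpace

/-- Semi-classical Newton's second law: if `∇R·∇S = 0` and
`(1/2)(|∇S|² - |∇R|²) + V = E`, then along trajectories of `X' = (∇S + ∇R)(X)` one has
`X'' = -∇(V - |∇R|²)(X)`, i.e. Newton's law with effective potential `V_eff = V - |∇R|²`. -/
theorem semiclassical_newton_law {n : ℕ}
    (R S V : EuclideanSpace ℝ (Fin n) → ℝ) (E : ℝ)
    (hR : ContDiff ℝ (⊤ : ℕ∞) R) (hS : ContDiff ℝ (⊤ : ℕ∞) S) (hV : ContDiff ℝ (⊤ : ℕ∞) V)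
    (horth : ∀ x, ⟪gradient R x, gradient S x⟫ = (0 : ℝ))
    (henergy : ∀ x, (1 / 2) * (‖gradient S x‖ ^ 2 - ‖gradient R x‖ ^ 2) + V x = E)
    (X : ℝ → EuclideanSpace ℝ (Fin n))
    (hX : ∀ t, HasDerivAt X (gradient S (X t) + gradient R (X t)) t) :
    ∀ t, HasDerivAt (fun s => deriv X s)
      (-(gradient (fun y => V y - ‖gradient R y‖ ^ 2) (X t))) t := by
  classical
  set F : EuclideanSpace ℝ (Fin n) → ℝ := fun y => R y + S y with hFdef
  have hFsm : ContDiff ℝ (⊤ : ℕ∞) F := hR.add hS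
  have hRd : Differentiable ℝ R := hR.differentiable (by simp)
  have hSd : Differentiable ℝ S := hS.differentiable (by simp)
  -- gradient of the sum
  have hgradF : ∀ x, gradient F x = gradient R x + gradient S x := by
    intro x
    simp only [hFdef, gradient, ((hRd x).hasFDerivAt.add (hSd x).hasFDerivAt).fderiv, map_add]
    rw [← map_add]
    exact congrArg _ ((hRd x).hasFDerivAt.add (hSd x).hasFDerivAt).fderiv
  -- the gradient field g is smooth
  set g : EuclideanSpace ℝ (Fin n) → EuclideanSpace ℝ (Fin n) := fun y => gradient F y with hgdef
  have hdfsm : ContDiff ℝ (⊤ : ℕ∞) (fderiv ℝ F) := hFsm.fderiv_right (by simp)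
  have hcomp : g = ⇑(InnerProductSpace.toDual ℝ
      (EuclideanSpace ℝ (Fin n))).symm.toContinuousLinearEquiv ∘ fderiv ℝ F := rfl
  have hgsm : ContDiff ℝ (⊤ : ℕ∞) g := by
    rw [hcomp]
    exact (InnerProductSpace.toDual ℝ (EuclideanSpace ℝ (Fin n))).symm.toContinuousLinearEquiv
      |>.toContinuousLinearMap.contDiff.comp hdfsm
  have hgd : Differentiable ℝ g := hgsm.differentiable (by simp)
  -- key inner identity : ⟪Dg x v, w⟫ = D²F x v w
  have hkey : ∀ x v w, ⟪fderiv ℝ g x v, w⟫ = fderiv ℝ (fderiv ℝ F) x v w := by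
    intro x v w
    rw [hcomp, ContinuousLinearEquiv.comp_fderiv]
    simp [InnerProductSpace.toDual_symm_apply]
  -- symmetry of the Hessian
  have hsym : ∀ x v w, ⟪fderiv ℝ g x v, w⟫ = ⟪fderiv ℝ g x w, v⟫ := by
    intro x v w
    rw [hkey, hkey]
    exact (hFsm.contDiffAt.isSymmSndFDerivAt ((by rw [minSmoothness_of_isRCLikeNormedField]; exact WithTop.coe_le_coe.mpr le_top))) v w
  -- gradient of ½‖g‖²
  have hhalf : ∀ x, HasGradientAt (fun y => (1/2 : ℝ) * ‖g y‖ ^ 2) (fderiv ℝ g x (g x)) x := by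
    intro x
    rw [hasGradientAt_iff_hasFDerivAt]
    have h1 : HasFDerivAt (fun y => ⟪g y, g y⟫)
        ((fderivInnerCLM ℝ (g x, g x)).comp <|
          (fderiv ℝ g x).prod (fderiv ℝ g x)) x :=
      (hgd x).hasFDerivAt.inner ℝ (hgd x).hasFDerivAt
    have h2 : HasFDerivAt (fun y => (1/2 : ℝ) * ‖g y‖ ^ 2)
        ((1/2 : ℝ) • ((fderivInnerCLM ℝ (g x, g x)).comp <|
          (fderiv ℝ g x).prod (fderiv ℝ g x))) x := by
      have := h1.const_mul (1/2 : ℝ)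
      simp only [real_inner_self_eq_norm_sq] at this
      exact this
    refine h2.congr_fderiv ?_
    ext v
    simp only [ContinuousLinearMap.coe_smul', Pi.smul_apply, ContinuousLinearMap.coe_comp',
      Function.comp_apply, ContinuousLinearMap.prod_apply, fderivInnerCLM_apply,
      InnerProductSpace.toDual_apply_apply, smul_eq_mul]
    have hb : ⟪g x, fderiv ℝ g x v⟫ = ⟪fderiv ℝ g x v, g x⟫ := real_inner_comm _ _
    rw [hb]
    linarith [hsym x v (g x)]
  -- the effective potential equals E - ½‖g‖²
  have hVeq : (fun y => V y - ‖gradient R y‖ ^ 2)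
      = fun y => E - (1/2 : ℝ) * ‖g y‖ ^ 2 := by
    funext y
    have h1 := henergy y
    have h2 : ‖g y‖ ^ 2 = ‖gradient R y‖ ^ 2 + ‖gradient S y‖ ^ 2 := by
      show ‖gradient F y‖ ^ 2 = _
      rw [hgradF y, ← real_inner_self_eq_norm_sq, inner_add_add_self, horth y,
        real_inner_self_eq_norm_sq, real_inner_self_eq_norm_sq]
      have h3 : ⟪gradient S y, gradient R y⟫ = (0 : ℝ) := by
        rw [real_inner_comm]; exact horth y
      rw [h3]; ring
    rw [h2]; linarith
  -- gradient of the effective potential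
  have hgradVeff : ∀ x, gradient (fun y => V y - ‖gradient R y‖ ^ 2) x
      = -(fderiv ℝ g x (g x)) := by
    intro x
    rw [hVeq]
    have hs : HasGradientAt (fun y => E - (1/2 : ℝ) * ‖g y‖ ^ 2) (-(fderiv ℝ g x (g x))) x := by
      have h3 := (hasFDerivAt_const E x).sub (hhalf x).hasFDerivAt
      rw [zero_sub] at h3
      rw [hasGradientAt_iff_hasFDerivAt, map_neg]
      exact h3
    exact hs.gradient
  -- the trajectory derivative
  intro t
  have hX' : ∀ s, HasDerivAt X (g (X s)) s := by
    intro s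
    have hgx : g (X s) = gradient S (X s) + gradient R (X s) := by
      show gradient F (X s) = _
      rw [hgradF (X s), add_comm]
    rw [hgx]
    exact hX s
  have hderiv : (fun s => deriv X s) = fun s => g (X s) := by
    funext s
    exact (hX' s).deriv
  rw [hderiv, hgradVeff (X t), neg_neg]
  exact ((hgd (X t)).hasFDerivAt).comp_hasDerivAt t (hX' t)
end
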